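/- With g(a) = S₁(w₊(a), a) along the critical point w₊(a), the derivative satisfies g'(a) = log[(1 − a + w₊(a))/(a − 2w₊(a))] = log[−1 − 2/(√(1 − 4a + a²) − 1)], and g'(a) > 0 for 0 < a < α = 2−√3. -/

import Mathlib

/-- Real form of `w₊(a)`. -/
noncomputable def wPlusR (a : ℝ) : ℝ :=
  (4 - 10 * a + a ^ 2 + 2 * (a - 2) * Real.sqrt (1 - 4 * a + a ^ 2)) /
    (-8 - 4 * a + a ^ 2)

/-- Real form of `S₁(w,a)` (all logarithm arguments are positive at `(w₊(a), a)` for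
`0 < a < 2-√3`). -/
noncomputable def S1R (a w : ℝ) : ℝ :=
  (1 + w) * Real.log (1 + w) + (2 - w) * Real.log (2 - w) +
    (2 - 2 * w) * Real.log (2 - 2 * w) - w * Real.log (-w) -
    (1 - w) * Real.log (1 - w) - (1 + w - a) * Real.log (1 + w - a) -
    (3 - w) * Real.log (3 - w) - (a - 2 * w) * Real.log (a - 2 * w)

/-- `g(a) = S₁(w₊(a), a)`. -/
noncomputable def gCrit (a : ℝ) : ℝ := S1R a (wPlusR a)

set_option maxHeartbeats 1000000 in
/-- `g'(a) = log[(1-a+w₊(a))/(a-2w₊(a))] = log[-1 - 2/(√(1-4a+a²)-1)] > 0`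
for `0 < a < α = 2-√3`. -/
theorem gCrit_deriv (a : ℝ) (h0 : 0 < a) (h1 : a < 2 - Real.sqrt 3) :
    HasDerivAt gCrit (Real.log ((1 - a + wPlusR a) / (a - 2 * wPlusR a))) a ∧
    Real.log ((1 - a + wPlusR a) / (a - 2 * wPlusR a)) =
      Real.log (-1 - 2 / (Real.sqrt (1 - 4 * a + a ^ 2) - 1)) ∧
    0 < Real.log ((1 - a + wPlusR a) / (a - 2 * wPlusR a)) := by
  have hsq3 : (Real.sqrt 3) ^ 2 = 3 := Real.sq_sqrt (by norm_num)
  have hsq3' : (1.7 : ℝ) < Real.sqrt 3 := by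
    nlinarith [Real.sqrt_nonneg 3]
  have ha3 : a < 3/10 := by nlinarith
  have hD : 0 < 1 - 4 * a + a ^ 2 := by nlinarith [Real.sqrt_nonneg 3]
  have hs2 : (Real.sqrt (1 - 4 * a + a ^ 2)) ^ 2 = 1 - 4 * a + a ^ 2 :=
    Real.sq_sqrt hD.le
  have hspos : 0 < Real.sqrt (1 - 4 * a + a ^ 2) := Real.sqrt_pos.mpr hD
  have hs1 : Real.sqrt (1 - 4 * a + a ^ 2) < 1 := by nlinarith
  have hM : (-8 - 4 * a + a ^ 2) < 0 := by nlinarith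
  have hMne : (-8 - 4 * a + a ^ 2) ≠ 0 := ne_of_lt hM
  have hMw : wPlusR a * (-8 - 4 * a + a ^ 2)
      = 4 - 10 * a + a ^ 2 + 2 * (a - 2) * Real.sqrt (1 - 4 * a + a ^ 2) :=
    div_mul_cancel₀ _ hMne
  have hnum : 0 < 4 - 10 * a + a ^ 2 + 2 * (a - 2) * Real.sqrt (1 - 4 * a + a ^ 2) := by
    nlinarith [hs2, hspos, hs1, sq_nonneg a, mul_pos h0 hspos]
  have hw : wPlusR a = (4 - 10 * a + a ^ 2 + 2 * (a - 2) * Real.sqrt (1 - 4 * a + a ^ 2)) /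
      (-8 - 4 * a + a ^ 2) := rfl
  have hwneg : wPlusR a < 0 := by
    rw [hw]; exact div_neg_of_pos_of_neg hnum hM
  have hwgt : a - 1 < wPlusR a := by
    rw [hw, lt_div_iff_of_neg hM]
    nlinarith [hspos, hs1]
  -- positivity of all logarithm arguments
  have p1 : 0 < 1 + wPlusR a := by linarith
  have p2 : 0 < 2 - wPlusR a := by linarith
  have p3 : 0 < 2 - 2 * wPlusR a := by linarith
  have p4 : 0 < -wPlusR a := by linarith
  have p5 : 0 < 1 - wPlusR a := by linarith
  have p6 : 0 < 1 + wPlusR a - a := by linarith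
  have p7 : 0 < 3 - wPlusR a := by linarith
  have p8 : 0 < a - 2 * wPlusR a := by linarith
  -- the critical-point identity
  have key : (1 + wPlusR a) * (1 - wPlusR a) * (3 - wPlusR a) * (a - 2 * wPlusR a) ^ 2
      = (2 - wPlusR a) * (2 - 2 * wPlusR a) ^ 2 * (-wPlusR a) * (1 + wPlusR a - a) := by
    apply mul_left_cancel₀ (pow_ne_zero 5 hMne)
    linear_combination ((24576) + (16384) * (wPlusR a) + (-32768) * (wPlusR a) ^ 2 + (16384) * (Real.sqrt (1 - 4 * a + a ^ 2)) + (-16384) * (Real.sqrt (1 - 4 * a + a ^ 2)) * (wPlusR a) + (-8192) * (Real.sqrt (1 - 4 * a + a ^ 2)) ^ 2 + (-36864) * a + (90112) * a * (wPlusR a) + (-81920) * a * (wPlusR a) ^ 2 + (24576) * a * (Real.sqrt (1 - 4 * a + a ^ 2)) + (-24576) * a * (Real.sqrt (1 - 4 * a + a ^ 2)) * (wPlusR a) + (-4096) * a * (Real.sqrt (1 - 4 * a + a ^ 2)) ^ 2 + (-76800) * a ^ 2 + (122880) * a ^ 2 * (wPlusR a) + (-61440) * a ^ 2 * (wPlusR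 a) ^ 2 + (7168) * a ^ 2 * (Real.sqrt (1 - 4 * a + a ^ 2)) ^ 2 + (-6144) * a ^ 3 + (36864) * a ^ 3 * (wPlusR a) + (-12288) * a ^ 3 * (Real.sqrt (1 - 4 * a + a ^ 2)) + (12288) * a ^ 3 * (Real.sqrt (1 - 4 * a + a ^ 2)) * (wPlusR a) + (2048) * a ^ 3 * (Real.sqrt (1 - 4 * a + a ^ 2)) ^ 2 + (14208) * a ^ 4 + (-26112) * a ^ 4 * (wPlusR a) + (15360) * a ^ 4 * (wPlusR a) ^ 2 + (-1536) * a ^ 4 * (Real.sqrt (1 - 4 * a + a ^ 2)) + (1536) * a ^ 4 * (Real.sqrt (1 - 4 * a + a ^ 2)) * (wPlusR a) + (-2432) * a ^ 4 * (Real.sqrt (1 - 4 * a + a ^ 2)) ^ 2 + (-3264) * a ^ 5 + (-9984) * a ^ 5 * (wPlusR a) + (1536) * a ^ 5 * (wPlusR a) ^ 2 + (2304) * a ^ 5 * (Real.sqrt (1 - 4 * a + a ^ 2)) + (-2304) * a ^ 5 * (Real.sqrt (1 - 4 * a + a ^ 2)) * (wPlusR a) + (-64) * a ^ 5 * (Real.sqrt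 (1 - 4 * a + a ^ 2)) ^ 2 + (-48) * a ^ 6 + (3840) * a ^ 6 * (wPlusR a) + (-1920) * a ^ 6 * (wPlusR a) ^ 2 + (304) * a ^ 6 * (Real.sqrt (1 - 4 * a + a ^ 2)) ^ 2 + (768) * a ^ 7 + (576) * a ^ 7 * (wPlusR a) + (-192) * a ^ 7 * (Real.sqrt (1 - 4 * a + a ^ 2)) + (192) * a ^ 7 * (Real.sqrt (1 - 4 * a + a ^ 2)) * (wPlusR a) + (-64) * a ^ 7 * (Real.sqrt (1 - 4 * a + a ^ 2)) ^ 2 + (-336) * a ^ 8 + (-348) * a ^ 8 * (wPlusR a) + (120) * a ^ 8 * (wPlusR a) ^ 2 + (36) * a ^ 8 * (Real.sqrt (1 - 4 * a + a ^ 2)) + (-36) * a ^ 8 * (Real.sqrt (1 - 4 * a + a ^ 2)) * (wPlusR a) + (4) * a ^ 8 * (Real.sqrt (1 - 4 * a + a ^ 2)) ^ 2 + (54) * a ^ 9 + (46) * a ^ 9 * (wPlusR a) + (-20) * a ^ 9 * (wPlusR a) ^ 2 + (-2) * a ^ 9 * (Real.sqrt (1 - 4 * a + a ^ 2)) + (2)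 * a ^ 9 * (Real.sqrt (1 - 4 * a + a ^ 2)) * (wPlusR a) + (-3) * a ^ 10 + (-2) * a ^ 10 * (wPlusR a) + (1) * a ^ 10 * (wPlusR a) ^ 2) * hMw + ((-98304) + (32768) * (Real.sqrt (1 - 4 * a + a ^ 2)) + (110592) * a ^ 2 + (-36864) * a ^ 2 * (Real.sqrt (1 - 4 * a + a ^ 2)) + (-18432) * a ^ 3 + (6144) * a ^ 3 * (Real.sqrt (1 - 4 * a + a ^ 2)) + (-41472) * a ^ 4 + (13824) * a ^ 4 * (Real.sqrt (1 - 4 * a + a ^ 2)) + (13824) * a ^ 5 + (-4608) * a ^ 5 * (Real.sqrt (1 - 4 * a + a ^ 2)) + (4032) * a ^ 6 + (-1344) * a ^ 6 * (Real.sqrt (1 - 4 * a + a ^ 2)) + (-2592) * a ^ 7 + (864) * a ^ 7 * (Real.sqrt (1 - 4 * a + a ^ 2)) + (432) * a ^ 8 + (-144) * a ^ 8 * (Real.sqrt (1 - 4 * a + a ^ 2)) + (-24) * a ^ 9 + (8) * a ^ 9 * (Real.sqrt (1 - 4 * a + a ^ 2))) * hs2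
  have l1 : Real.log ((1 + wPlusR a) * (1 - wPlusR a) * (3 - wPlusR a) * (a - 2 * wPlusR a) ^ 2)
      = Real.log (1 + wPlusR a) + Real.log (1 - wPlusR a) + Real.log (3 - wPlusR a)
        + 2 * Real.log (a - 2 * wPlusR a) := by
    rw [Real.log_mul (mul_ne_zero (mul_ne_zero p1.ne' p5.ne') p7.ne') (pow_ne_zero 2 p8.ne'),
      Real.log_mul (mul_ne_zero p1.ne' p5.ne') p7.ne', Real.log_mul p1.ne' p5.ne',
      Real.log_pow]
    push_cast; ring
  have l2 : Real.log ((2 - wPlusR a) * (2 - 2 * wPlusR a) ^ 2 * (-wPlusR a) * (1 + wPlusR a - a))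
      = Real.log (2 - wPlusR a) + 2 * Real.log (2 - 2 * wPlusR a) + Real.log (-wPlusR a)
        + Real.log (1 + wPlusR a - a) := by
    rw [Real.log_mul (mul_ne_zero (mul_ne_zero p2.ne' (pow_ne_zero 2 p3.ne')) p4.ne') p6.ne',
      Real.log_mul (mul_ne_zero p2.ne' (pow_ne_zero 2 p3.ne')) p4.ne',
      Real.log_mul p2.ne' (pow_ne_zero 2 p3.ne'), Real.log_pow]
    push_cast; ring
  have hPw : Real.log (1 + wPlusR a) - Real.log (2 - wPlusR a) - 2 * Real.log (2 - 2 * wPlusR a)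
      - Real.log (-wPlusR a) + Real.log (1 - wPlusR a) - Real.log (1 + wPlusR a - a)
      + Real.log (3 - wPlusR a) + 2 * Real.log (a - 2 * wPlusR a) = 0 := by
    have e := congrArg Real.log key
    rw [l1, l2] at e
    linarith
  -- derivative of wPlusR
  obtain ⟨wd, hw'⟩ : ∃ d, HasDerivAt wPlusR d a := by
    have hinner : HasDerivAt (fun x : ℝ => 1 - 4 * x + x ^ 2) (-(4 * 1) + 2 * a ^ 1) a := by
      exact (((hasDerivAt_id a).const_mul 4).const_sub 1).add
        (by simpa using hasDerivAt_pow 2 a)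
    have hsqrt : HasDerivAt (fun x : ℝ => Real.sqrt (1 - 4 * x + x ^ 2))
        (1 / (2 * Real.sqrt (1 - 4 * a + a ^ 2)) * (-(4 * 1) + 2 * a ^ 1)) a :=
      (Real.hasDerivAt_sqrt hD.ne').comp a hinner
    have hnum' : HasDerivAt
        (fun x : ℝ => 4 - 10 * x + x ^ 2 + 2 * (x - 2) * Real.sqrt (1 - 4 * x + x ^ 2)) _ a :=
      ((((hasDerivAt_id a).const_mul 10).const_sub 4).add
        (by simpa using hasDerivAt_pow 2 a)).add
        ((((hasDerivAt_id a).sub_const 2).const_mul 2).mul hsqrt)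
    have hden : HasDerivAt (fun x : ℝ => -8 - 4 * x + x ^ 2) _ a :=
      (((hasDerivAt_id a).const_mul 4).const_sub (-8)).add
        (by simpa using hasDerivAt_pow 2 a)
    exact ⟨_, hnum'.div hden hMne⟩
  -- derivative of each term of S1R ∘ (id, wPlusR)
  have t1 := (Real.hasDerivAt_mul_log p1.ne').comp a (hw'.const_add 1)
  have t2 := (Real.hasDerivAt_mul_log p2.ne').comp a (hw'.const_sub 2)
  have t3 := (Real.hasDerivAt_mul_log p3.ne').comp a ((hw'.const_mul 2).const_sub 2)
  have t4 := (Real.hasDerivAt_mul_log p4.ne').comp a hw'.neg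
  have t5 := (Real.hasDerivAt_mul_log p5.ne').comp a (hw'.const_sub 1)
  have t6 := HasDerivAt.comp (h := fun x => 1 + wPlusR x - x) a
    (Real.hasDerivAt_mul_log p6.ne') ((hw'.const_add 1).sub (hasDerivAt_id' a))
  have t7 := (Real.hasDerivAt_mul_log p7.ne').comp a (hw'.const_sub 3)
  have t8 := HasDerivAt.comp (h := fun x => x - 2 * wPlusR x) a
    (Real.hasDerivAt_mul_log p8.ne') ((hasDerivAt_id' a).sub (hw'.const_mul 2))
  have hE := ((((((t1.add t2).add t3).add t4).sub t5).sub t6).sub t7).sub t8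
  have hgG : HasDerivAt gCrit
      ((Real.log (1 + wPlusR a) + 1) * wd + (Real.log (2 - wPlusR a) + 1) * (-wd)
        + (Real.log (2 - 2 * wPlusR a) + 1) * (-(2 * wd))
        + (Real.log (-wPlusR a) + 1) * (-wd)
        - (Real.log (1 - wPlusR a) + 1) * (-wd)
        - (Real.log (1 + wPlusR a - a) + 1) * (wd - 1)
        - (Real.log (3 - wPlusR a) + 1) * (-wd)
        - (Real.log (a - 2 * wPlusR a) + 1) * (1 - 2 * wd)) a := by
    apply hE.congr_of_eventuallyEq
    filter_upwards with x
    simp only [gCrit, S1R, Function.comp, Pi.add_apply, Pi.sub_apply, Pi.neg_apply]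
    ring
  have heval : (Real.log (1 + wPlusR a) + 1) * wd + (Real.log (2 - wPlusR a) + 1) * (-wd)
        + (Real.log (2 - 2 * wPlusR a) + 1) * (-(2 * wd))
        + (Real.log (-wPlusR a) + 1) * (-wd)
        - (Real.log (1 - wPlusR a) + 1) * (-wd)
        - (Real.log (1 + wPlusR a - a) + 1) * (wd - 1)
        - (Real.log (3 - wPlusR a) + 1) * (-wd)
        - (Real.log (a - 2 * wPlusR a) + 1) * (1 - 2 * wd)
      = Real.log ((1 - a + wPlusR a) / (a - 2 * wPlusR a)) := by
    rw [show (1 - a + wPlusR a) = 1 + wPlusR a - a by ring,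
      Real.log_div p6.ne' p8.ne']
    linear_combination wd * hPw
  have hs1ne : Real.sqrt (1 - 4 * a + a ^ 2) - 1 ≠ 0 :=
    ne_of_lt (by linarith)
  have h1sne : (1 : ℝ) - Real.sqrt (1 - 4 * a + a ^ 2) ≠ 0 :=
    ne_of_gt (by linarith)
  have e_left : (1 - a + wPlusR a) / (a - 2 * wPlusR a)
      = (1 + Real.sqrt (1 - 4 * a + a ^ 2)) / (1 - Real.sqrt (1 - 4 * a + a ^ 2)) := by
    rw [div_eq_div_iff p8.ne' h1sne]
    apply mul_left_cancel₀ hMne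
    linear_combination (3 + Real.sqrt (1 - 4 * a + a ^ 2)) * hMw + (2 * a - 4) * hs2
  have e_right : -1 - 2 / (Real.sqrt (1 - 4 * a + a ^ 2) - 1)
      = (1 + Real.sqrt (1 - 4 * a + a ^ 2)) / (1 - Real.sqrt (1 - 4 * a + a ^ 2)) := by
    field_simp
    ring
  refine ⟨heval ▸ hgG, by rw [e_left, e_right], ?_⟩
  rw [e_left]
  apply Real.log_pos
  rw [lt_div_iff₀ (by linarith)]
  linarith
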